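/- In a σ-sequential effect algebra, if b ∘ a = 0 then b ∘ ⌈a⌉ = 0, where ⌈a⌉ = (⋀ₙ (a⊥)ⁿ)⊥ is the smallest sharp element above a. -/

import Mathlib

/-- `x ≤ y` for a partially defined addition: there is `c` with `x + c` defined and `x + c = y`. -/
def pLe {E : Type*} (D : E → E → Prop) (add : E → E → E) (x y : E) : Prop :=
  ∃ c, D x c ∧ add x c = y

/-- An effect algebra: a partially defined commutative associative addition with zero,
the zero-one law and unique complements. `D a b` means "`a + b` is defined". -/
structure EffectAlgebra (E : Type*) where
  D : E → E → Prop
  add : E → E → E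
  zero : E
  one : E
  compl : E → E
  D_comm : ∀ {a b}, D a b → D b a
  add_comm' : ∀ {a b}, D a b → add a b = add b a
  D_assoc_left : ∀ {a b c}, D b c → D a (add b c) → D a b
  D_assoc : ∀ {a b c}, D b c → D a (add b c) → D (add a b) c
  add_assoc' : ∀ {a b c}, D b c → D a (add b c) → add a (add b c) = add (add a b) c
  D_zero : ∀ a, D a zero
  add_zero' : ∀ a, add a zero = a
  zero_one : ∀ {a}, D a one → a = zero
  D_compl : ∀ a, D a (compl a)
  add_compl : ∀ a, add a (compl a) = one
  compl_unique : ∀ {a b}, D a b → add a b = one → b = compl a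

namespace EffectAlgebra
variable {E : Type*} (EA : EffectAlgebra E)
/-- The canonical order of an effect algebra. -/
def le (a b : E) : Prop := pLe EA.D EA.add a b
end EffectAlgebra

/-- A sequential effect algebra (Gudder–Greechie): an effect algebra with a total
binary operation `seq` (the sequential product) satisfying the five axioms. -/
structure SEA (E : Type*) extends EffectAlgebra E where
  seq : E → E → E
  seq_D : ∀ {b c} (a : E), D b c → D (seq a b) (seq a c)
  seq_add : ∀ {b c} (a : E), D b c → seq a (add b c) = add (seq a b) (seq a c)
  one_seq : ∀ a, seq one a = a
  seq_orth : ∀ {a b}, seq a b = zero → seq b a = zero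
  seq_compl : ∀ {a b}, seq a b = seq b a → seq a (compl b) = seq (compl b) a
  seq_assoc : ∀ {a b}, seq a b = seq b a → ∀ c, seq a (seq b c) = seq (seq a b) c
  comm_seq : ∀ {a b c}, seq c a = seq a c → seq c b = seq b c →
    seq c (seq a b) = seq (seq a b) c
  comm_add : ∀ {a b c}, seq c a = seq a c → seq c b = seq b c → D a b →
    seq c (add a b) = seq (add a b) c

namespace SEA
variable {E : Type*} (SE : SEA E)
/-- The order of the underlying effect algebra. -/
def le (a b : E) : Prop := pLe SE.D SE.add a b
end SEA

/-- A σ-sequential effect algebra: decreasing sequences have infima (given by `inf`),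
preserved by left sequential multiplication, and commutation is stable under them. -/
structure SigmaSEA (E : Type*) extends SEA E where
  inf : (ℕ → E) → E
  inf_le : ∀ {f : ℕ → E}, (∀ n, pLe D add (f (n + 1)) (f n)) →
    ∀ n, pLe D add (inf f) (f n)
  le_inf : ∀ {f : ℕ → E}, (∀ n, pLe D add (f (n + 1)) (f n)) →
    ∀ x, (∀ n, pLe D add x (f n)) → pLe D add x (inf f)
  seq_inf : ∀ {f : ℕ → E} (b : E), (∀ n, pLe D add (f (n + 1)) (f n)) →
    seq b (inf f) = inf (fun n => seq b (f n))
  comm_inf : ∀ {f : ℕ → E} {b : E}, (∀ n, pLe D add (f (n + 1)) (f n)) →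
    (∀ n, seq b (f n) = seq (f n) b) → seq b (inf f) = seq (inf f) b

namespace SigmaSEA
variable {E : Type*} (SE : SigmaSEA E)

/-- `SE.pow a n` is the `n`-fold sequential product `a ∘ (a ∘ (⋯ ∘ a))`. -/
def pow (a : E) : ℕ → E
  | 0 => SE.one
  | n + 1 => SE.seq a (pow a n)

/-- The floor `⌊a⌋ = ⋀ₙ aⁿ`, the largest sharp element below `a`. -/
def floor (a : E) : E := SE.inf fun n => SE.pow a (n + 1)

/-- The ceiling `⌈a⌉ = ⌊a⊥⌋⊥`, the smallest sharp element above `a`. -/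
def ceil (a : E) : E := SE.compl (SE.floor (SE.compl a))

end SigmaSEA

/-!
Since `b ∘ a = 0` forces `a ∘ b = 0`, the element `b` commutes with `a`, hence with `a⊥`, and
`b = b ∘ a + b ∘ a⊥` gives `b ∘ a⊥ = b`. Then `b ∘ (a⊥)ⁿ = b` for every `n`, and as `b ∘ (−)`
preserves the infimum of this decreasing sequence, `b ∘ ⌊a⊥⌋ = b`. Finally
`b = b ∘ ⌊a⊥⌋ + b ∘ ⌈a⌉ = b + b ∘ ⌈a⌉`, and cancellation gives `b ∘ ⌈a⌉ = 0`.
-/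

namespace EffectAlgebra
variable {E : Type*} (EA : EffectAlgebra E)

lemma pLe_refl (x : E) : pLe EA.D EA.add x x :=
  ⟨EA.zero, EA.D_zero x, EA.add_zero' x⟩

lemma le_one (x : E) : pLe EA.D EA.add x EA.one :=
  ⟨EA.compl x, EA.D_compl x, EA.add_compl x⟩

lemma zero_add (x : E) : EA.add EA.zero x = x := by
  rw [← EA.add_comm' (EA.D_zero x), EA.add_zero']

lemma compl_compl (x : E) : EA.compl (EA.compl x) = x :=
  (EA.compl_unique (EA.D_comm (EA.D_compl x))
    (by rw [EA.add_comm' (EA.D_comm (EA.D_compl x))]; exact EA.add_compl x)).symm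

lemma compl_zero : EA.compl EA.zero = EA.one :=
  (EA.compl_unique (EA.D_comm (EA.D_zero EA.one)) (EA.zero_add EA.one)).symm

variable {EA}

lemma D_right_of_D_add {a b c : E} (hab : EA.D a b) (h : EA.D (EA.add a b) c) : EA.D b c := by
  rw [EA.add_comm' hab] at h
  exact EA.D_comm (EA.D_assoc_left (EA.D_comm hab) (EA.D_comm h))

lemma D_add_right_of_D_add {a b c : E} (hab : EA.D a b) (h : EA.D (EA.add a b) c) :
    EA.D a (EA.add b c) := by
  have hbc := D_right_of_D_add hab h
  have hcba : EA.D c (EA.add b a) := by rw [← EA.add_comm' hab]; exact EA.D_comm h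
  have h' := EA.D_comm (EA.D_assoc (EA.D_comm hab) hcba)
  rwa [EA.add_comm' (EA.D_comm hbc)] at h'

lemma add_compl_add {a b : E} (hab : EA.D a b) :
    EA.add a (EA.compl (EA.add a b)) = EA.compl b := by
  set d := EA.compl (EA.add a b)
  have hd : EA.D (EA.add a b) d := EA.D_compl _
  have hdb : EA.D d b := EA.D_comm (D_right_of_D_add hab hd)
  have ha_db : EA.D a (EA.add d b) := by
    rw [EA.add_comm' hdb]; exact D_add_right_of_D_add hab hd
  have hsum : EA.add (EA.add a d) b = EA.one := by
    rw [← EA.add_assoc' hdb ha_db, EA.add_comm' hdb,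
      EA.add_assoc' (EA.D_comm hdb) (D_add_right_of_D_add hab hd)]
    exact EA.add_compl _
  have had_b := EA.D_assoc hdb ha_db
  exact EA.compl_unique (EA.D_comm had_b) (by rw [EA.add_comm' (EA.D_comm had_b)]; exact hsum)

lemma add_left_cancel {a b c : E} (hb : EA.D a b) (hc : EA.D a c)
    (h : EA.add a b = EA.add a c) : b = c := by
  have hcompl : EA.compl b = EA.compl c := by
    rw [← add_compl_add hb, ← add_compl_add hc, h]
  rw [← EA.compl_compl b, hcompl, EA.compl_compl]

lemma eq_zero_of_add_eq_self {a b : E} (hb : EA.D a b) (h : EA.add a b = a) : b = EA.zero :=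
  add_left_cancel hb (EA.D_zero a) (by rw [h, EA.add_zero'])

lemma right_eq_zero_of_add_eq_zero {a b : E} (hab : EA.D a b) (h : EA.add a b = EA.zero) :
    b = EA.zero := by
  have h0 : EA.D (EA.add a b) EA.one := by rw [h]; exact EA.D_comm (EA.D_zero EA.one)
  exact EA.zero_one (D_right_of_D_add hab h0)

lemma pLe_antisymm {x y : E} (hxy : pLe EA.D EA.add x y) (hyx : pLe EA.D EA.add y x) :
    x = y := by
  obtain ⟨c, hc, rfl⟩ := hxy
  obtain ⟨d, hd, hcd_eq⟩ := hyx
  have hcd : EA.D c d := D_right_of_D_add hc hd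
  have hx : EA.D x (EA.add c d) := D_add_right_of_D_add hc hd
  have hzero : EA.add c d = EA.zero :=
    eq_zero_of_add_eq_self hx (by rw [EA.add_assoc' hcd hx, hcd_eq])
  have hc0 : c = EA.zero := by
    rwa [right_eq_zero_of_add_eq_zero hcd hzero, EA.add_zero'] at hzero
  rw [hc0, EA.add_zero']

end EffectAlgebra

namespace SEA
variable {E : Type*} (SA : SEA E)

lemma seq_zero (x : E) : SA.seq x SA.zero = SA.zero := by
  have h := SA.seq_add x (SA.D_zero SA.zero)
  rw [SA.add_zero'] at h
  exact SA.eq_zero_of_add_eq_self (SA.seq_D x (SA.D_zero SA.zero)) h.symm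

lemma seq_one (x : E) : SA.seq x SA.one = x := by
  have hcomm : SA.seq x SA.zero = SA.seq SA.zero x := by
    rw [SA.seq_zero, SA.seq_orth (SA.seq_zero x)]
  rw [← SA.compl_zero, SA.seq_compl hcomm, SA.compl_zero, SA.one_seq]

lemma seq_mono (c : E) {x y : E} (h : pLe SA.D SA.add x y) :
    pLe SA.D SA.add (SA.seq c x) (SA.seq c y) := by
  obtain ⟨d, hd, rfl⟩ := h
  exact ⟨SA.seq c d, SA.seq_D c hd, (SA.seq_add c hd).symm⟩

lemma seq_add_seq_compl (b p : E) : SA.add (SA.seq b p) (SA.seq b (SA.compl p)) = b := by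
  rw [← SA.seq_add b (SA.D_compl p), SA.add_compl, SA.seq_one]

variable {SA}

lemma seq_compl_eq_self_of_seq_eq_zero {b p : E} (h : SA.seq b p = SA.zero) :
    SA.seq b (SA.compl p) = b := by
  have := SA.seq_add_seq_compl b p
  rwa [h, SA.zero_add] at this

lemma seq_compl_eq_zero_of_seq_eq_self {b p : E} (h : SA.seq b p = b) :
    SA.seq b (SA.compl p) = SA.zero := by
  have hD := SA.seq_D b (SA.D_compl p)
  rw [h] at hD
  have := SA.seq_add_seq_compl b p
  rw [h] at this
  exact SA.eq_zero_of_add_eq_self hD this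

end SEA

namespace SigmaSEA
variable {E : Type*} (SE : SigmaSEA E)

lemma pow_succ_le (a : E) (n : ℕ) : pLe SE.D SE.add (SE.pow a (n + 1)) (SE.pow a n) := by
  induction n with
  | zero => exact SE.le_one _
  | succ n ih => exact SE.seq_mono a ih

lemma inf_const (x : E) : SE.inf (fun _ => x) = x :=
  SE.pLe_antisymm (SE.inf_le (fun _ => SE.pLe_refl x) 0)
    (SE.le_inf (fun _ => SE.pLe_refl x) x fun _ => SE.pLe_refl x)

variable {SE}

lemma seq_pow_eq_self {a b : E} (hcomm : SE.seq b a = SE.seq a b) (h : SE.seq b a = b)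
    (n : ℕ) : SE.seq b (SE.pow a n) = b := by
  induction n with
  | zero => exact SE.seq_one b
  | succ n ih => rw [pow, SE.seq_assoc hcomm, h, ih]

lemma seq_floor_eq_self {a b : E} (hcomm : SE.seq b a = SE.seq a b) (h : SE.seq b a = b) :
    SE.seq b (SE.floor a) = b := by
  rw [floor, SE.seq_inf b fun n => SE.pow_succ_le a (n + 1)]
  simp only [seq_pow_eq_self hcomm h]
  exact SE.inf_const b

/-- In a σ-sequential effect algebra, if `b ∘ a = 0` then `b ∘ ⌈a⌉ = 0`. -/
theorem seq_ceil_eq_zero {E : Type*} (SE : SigmaSEA E) (a b : E)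
    (h : SE.seq b a = SE.zero) : SE.seq b (SE.ceil a) = SE.zero := by
  have hcomm : SE.seq b a = SE.seq a b := by rw [h, SE.seq_orth h]
  have hcomm_compl : SE.seq b (SE.compl a) = SE.seq (SE.compl a) b := SE.seq_compl hcomm
  have hfloor : SE.seq b (SE.floor (SE.compl a)) = b :=
    seq_floor_eq_self hcomm_compl (SEA.seq_compl_eq_self_of_seq_eq_zero h)
  exact SEA.seq_compl_eq_zero_of_seq_eq_self hfloor

end SigmaSEA
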